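/- arXiv:1105.1612 — 6 statements merged into one kernel-verified Lean document; each statement's English description precedes it below -/
import Mathlib

section
/- Let γ ∈ ℂ \ 2ℤ and define f : ℤ≥0 → ℂ by the recurrence γ f_n = 2n (f_{n+1} − f_n)(f_n − f_{n−1})/(f_{n+1} − f_{n−1}) for n ≥ 1, with f_0 = 0 and f_1 = 1. Then f_{2l} = (2l/(2l+γ)) ∏_{k=1}^{l} (2k+γ)/(2k−γ) and f_{2l+1} = ∏_{k=1}^{l} (2k+γ)/(2k−γ). -/
/-!
Clearing the denominator, the recurrence reads
`f_{n+1} (γ f_n - 2n (f_n - f_{n-1})) = f_n (γ f_{n-1} - 2n (f_n - f_{n-1}))`,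
which is linear in `f_{n+1}`. Along the claimed solution the coefficient of `f_{n+1}` is a
nonzero multiple of `γ ∏_{k ≤ l} (2k+γ)/(2k-γ)`, so each value is forced, and an induction on `l`
checks the formulas two steps at a time.
-/

open Finset

section Recurrence

variable {K : Type*} [Field K] {γ n a b c : K}

/-- Since `x / 0 = 0`, the recurrence itself forces a nonzero denominator once `γ b ≠ 0`. -/
theorem eq_div_of_recurrence (hb : γ * b ≠ 0) (hcoef : γ * b - 2 * n * (b - a) ≠ 0)
    (h : γ * b = 2 * n * ((c - b) * (b - a)) / (c - a)) :
    c = b * (γ * a - 2 * n * (b - a)) / (γ * b - 2 * n * (b - a)) := by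
  have hca : c - a ≠ 0 := by
    rintro hca
    rw [hca, div_zero] at h
    exact hb h
  rw [eq_div_iff hca] at h
  rw [eq_div_iff hcoef]
  linear_combination h

-- `x = 2l` and `P = ∏_{k ≤ l} (2k+γ)/(2k-γ)`: the recurrence at `n = 2l+1` and at `n = 2l+2`.
variable {x P : K}

theorem recurrence_odd_step (hγ : γ ≠ 0) (hP : P ≠ 0) (hx : x + γ ≠ 0) (hx' : x + 2 - γ ≠ 0)
    (h : γ * P = 2 * (x + 1) * ((c - P) * (P - x / (x + γ) * P)) / (c - x / (x + γ) * P)) :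
    c = (x + 2) / (x + 2 - γ) * P := by
  have hcoef : γ * P - 2 * (x + 1) * (P - x / (x + γ) * P) = γ * P * (γ - (x + 2)) / (x + γ) := by
    field_simp
    ring
  have hx'' : γ - (x + 2) ≠ 0 := fun h ↦ hx' (by linear_combination -h)
  rw [eq_div_of_recurrence (mul_ne_zero hγ hP) (by rw [hcoef]; positivity) h, hcoef]
  field_simp
  ring

theorem recurrence_even_step (hγ : γ ≠ 0) (hP : P ≠ 0) (hx : x + 2 ≠ 0) (hx' : x + 2 - γ ≠ 0)
    (h : γ * ((x + 2) / (x + 2 - γ) * P) = 2 * (x + 2) *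
      ((c - (x + 2) / (x + 2 - γ) * P) * ((x + 2) / (x + 2 - γ) * P - P)) / (c - P)) :
    c = (x + 2 + γ) / (x + 2 - γ) * P := by
  have hcoef : γ * ((x + 2) / (x + 2 - γ) * P) - 2 * (x + 2) * ((x + 2) / (x + 2 - γ) * P - P)
      = -(γ * (x + 2) * P / (x + 2 - γ)) := by
    field_simp
    ring
  have hb : γ * ((x + 2) / (x + 2 - γ) * P) ≠ 0 := mul_ne_zero hγ (by positivity)
  rw [eq_div_of_recurrence hb (by rw [hcoef, neg_ne_zero]; positivity) h, hcoef]
  field_simp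
  ring

end Recurrence

section Boundary

variable {γ : ℂ}

theorem two_mul_natCast_add_ne_zero (hγ : ∀ k : ℤ, γ ≠ 2 * k) (k : ℕ) : 2 * (k : ℂ) + γ ≠ 0 :=
  fun h ↦ hγ (-k) (by push_cast; linear_combination h)

theorem two_mul_natCast_sub_ne_zero (hγ : ∀ k : ℤ, γ ≠ 2 * k) (k : ℕ) : 2 * (k : ℂ) - γ ≠ 0 :=
  fun h ↦ hγ k (by push_cast; linear_combination -h)

noncomputable def boundaryProd (γ : ℂ) (l : ℕ) : ℂ :=
  ∏ k ∈ Icc 1 l, (2 * (k : ℂ) + γ) / (2 * k - γ)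

theorem boundaryProd_ne_zero (hγ : ∀ k : ℤ, γ ≠ 2 * k) (l : ℕ) : boundaryProd γ l ≠ 0 :=
  prod_ne_zero_iff.mpr fun k _ ↦
    div_ne_zero (two_mul_natCast_add_ne_zero hγ k) (two_mul_natCast_sub_ne_zero hγ k)

theorem boundaryProd_succ (l : ℕ) :
    boundaryProd γ (l + 1) = (2 * l + 2 + γ) / (2 * l + 2 - γ) * boundaryProd γ l := by
  unfold boundaryProd
  rw [prod_Icc_succ_top (by omega)]
  push_cast
  ring

def BoundaryFormulaAt (γ : ℂ) (f : ℕ → ℂ) (l : ℕ) : Prop :=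
  f (2 * l) = (2 * l / (2 * l + γ)) * boundaryProd γ l ∧ f (2 * l + 1) = boundaryProd γ l

theorem BoundaryFormulaAt.succ (hγ : ∀ k : ℤ, γ ≠ 2 * k) {f : ℕ → ℂ}
    (hrec : ∀ n : ℕ, γ * f (n + 1) =
      2 * (n + 1) * ((f (n + 2) - f (n + 1)) * (f (n + 1) - f n)) / (f (n + 2) - f n))
    {l : ℕ} (hl : BoundaryFormulaAt γ f l) : BoundaryFormulaAt γ f (l + 1) := by
  obtain ⟨heven, hodd⟩ := hl
  have hγ0 : γ ≠ 0 := by simpa using hγ 0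
  have hP := boundaryProd_ne_zero hγ l
  have hplus : 2 * (l : ℂ) + 2 + γ ≠ 0 := by
    simpa [mul_add, add_assoc] using two_mul_natCast_add_ne_zero hγ (l + 1)
  have hminus : 2 * (l : ℂ) + 2 - γ ≠ 0 := by
    simpa [mul_add] using two_mul_natCast_sub_ne_zero hγ (l + 1)
  have htwo : 2 * (l : ℂ) + 2 ≠ 0 := by exact_mod_cast (by omega : 2 * l + 2 ≠ 0)
  have hnext : f (2 * l + 2) = (2 * l + 2) / (2 * l + 2 - γ) * boundaryProd γ l := by
    refine recurrence_odd_step hγ0 hP (two_mul_natCast_add_ne_zero hγ l) hminus ?_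
    simpa [heven, hodd] using hrec (2 * l)
  have hnext' : f (2 * l + 3) = (2 * l + 2 + γ) / (2 * l + 2 - γ) * boundaryProd γ l := by
    refine recurrence_even_step hγ0 hP htwo hminus ?_
    simpa [hnext, hodd, add_assoc, one_add_one_eq_two] using hrec (2 * l + 1)
  rw [BoundaryFormulaAt, show 2 * (l + 1) = 2 * l + 2 by ring,
    show 2 * l + 2 + 1 = 2 * l + 3 by ring, boundaryProd_succ, hnext, hnext',
    show 2 * ((l + 1 : ℕ) : ℂ) = 2 * l + 2 by push_cast; ring, ← mul_assoc,
    div_mul_div_cancel₀ hplus]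
  exact ⟨rfl, rfl⟩

end Boundary

theorem discrete_power_boundary_formula_general
    (γ : ℂ) (hγ : ∀ k : ℤ, γ ≠ 2 * k)
    (f : ℕ → ℂ) (h0 : f 0 = 0) (h1 : f 1 = 1)
    (hrec : ∀ n : ℕ, 1 ≤ n →
      γ * f n = 2 * n * ((f (n + 1) - f n) * (f n - f (n - 1))) / (f (n + 1) - f (n - 1))) :
    ∀ l : ℕ,
      f (2 * l) = (2 * l / (2 * l + γ)) * ∏ k ∈ Icc 1 l, (2 * (k : ℂ) + γ) / (2 * k - γ) ∧
      f (2 * l + 1) = ∏ k ∈ Icc 1 l, (2 * (k : ℂ) + γ) / (2 * k - γ) := by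
  have hrec' (n : ℕ) : γ * f (n + 1) =
      2 * (n + 1) * ((f (n + 2) - f (n + 1)) * (f (n + 1) - f n)) / (f (n + 2) - f n) := by
    simpa using hrec (n + 1) le_add_self
  intro l
  induction l with
  | zero => simp [h0, h1]
  | succ l ih => exact BoundaryFormulaAt.succ hγ hrec' ih

/-- The discrete power function on the boundary row `m = 0`: the recurrence
`γ f_n = 2n (f_{n+1} - f_n)(f_n - f_{n-1})/(f_{n+1} - f_{n-1})` with
`f_0 = 0`, `f_1 = 1` has the explicit solution
`f_{2l} = (2l/(2l+γ)) ∏_{k=1}^{l} (2k+γ)/(2k-γ)` and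
`f_{2l+1} = ∏_{k=1}^{l} (2k+γ)/(2k-γ)`. -/
theorem discrete_power_boundary_formula
    (γ : ℂ) (hγ : ∀ k : ℤ, γ ≠ 2 * k)
    (f : ℕ → ℂ) (h0 : f 0 = 0) (h1 : f 1 = 1)
    (hden : ∀ n : ℕ, 1 ≤ n → f (n + 1) - f (n - 1) ≠ 0)
    (hrec : ∀ n : ℕ, 1 ≤ n →
      γ * f n = 2 * n * ((f (n + 1) - f n) * (f n - f (n - 1))) / (f (n + 1) - f (n - 1))) :
    ∀ l : ℕ,
      f (2 * l) = (2 * l / (2 * l + γ)) * ∏ k ∈ Icc 1 l, (2 * (k : ℂ) + γ) / (2 * k - γ) ∧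
      f (2 * l + 1) = ∏ k ∈ Icc 1 l, (2 * (k : ℂ) + γ) / (2 * k - γ) :=
  discrete_power_boundary_formula_general γ hγ f h0 h1 hrec
end

section
/- Let γ = 1 + iδ with δ ∈ ℝ. Then for every n ≥ 0, the successive differences of the discrete power function on the boundary satisfy f_{2n+2} − f_{2n+1} = ∏_{k=1}^{n+1} (2k−1+iδ)/(2k−1−iδ) and f_{2n+1} − f_{2n} = ∏_{k=1}^{n} (2k−1+iδ)/(2k−1−iδ); in particular |f_{n+1} − f_n| = 1 for all n ≥ 0. -/
/-!
With `P n = ∏_{k ≤ n} (2k + γ)/(2k - γ)`, both edges `f (2n+1) - f (2n)` and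
`f (2n) - f (2n-1)` equal `P n * γ/(2n + γ)`, because `P (n-1) = P n * (2n - γ)/(2n + γ)`.
This telescopes to `∏_{k ≤ n} (2k - 2 + γ)/(2k - γ)`, and for `γ = 1 + iδ` each factor is
`w / conj w` with `w = 2k - 1 + iδ`, a unit complex number. The identities hold for any `γ ∉ 2ℤ`
in any field.
-/

open Finset Complex

open scoped ComplexConjugate

namespace DiscretePower

variable {K : Type*} [Field K] {γ : K}

lemma two_mul_add_ne_zero (hγ : ∀ k : ℤ, γ ≠ 2 * k) (k : ℕ) : 2 * (k : K) + γ ≠ 0 := by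
  intro h
  exact hγ (-k) (by push_cast; linear_combination h)

lemma two_mul_sub_ne_zero (hγ : ∀ k : ℤ, γ ≠ 2 * k) (k : ℕ) : 2 * (k : K) - γ ≠ 0 := by
  intro h
  exact hγ k (by push_cast; linear_combination -h)

/-- The ratio of the two products telescopes: `∏ (2k + γ)/(2k - 2 + γ) = (2n + γ)/γ`. -/
lemma prod_mul_div_eq_prod (hγ : ∀ k : ℤ, γ ≠ 2 * k) (n : ℕ) :
    (∏ k ∈ Icc 1 n, (2 * (k : K) + γ) / (2 * k - γ)) * (γ / (2 * n + γ)) =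
      ∏ k ∈ Icc 1 n, (2 * (k : K) - 2 + γ) / (2 * k - γ) := by
  induction n with
  | zero => simpa using div_self (by simpa using two_mul_add_ne_zero hγ 0)
  | succ n ih =>
    rw [prod_Icc_succ_top (by omega), prod_Icc_succ_top (by omega), ← ih]
    have hn := two_mul_add_ne_zero hγ n
    have hn1 := two_mul_add_ne_zero hγ (n + 1)
    push_cast at hn1 ⊢
    field_simp
    ring

lemma sub_even_eq_prod {f : ℕ → K} (hγ : ∀ k : ℤ, γ ≠ 2 * k)
    (heven : ∀ l : ℕ,
      f (2 * l) = (2 * l / (2 * l + γ)) * ∏ k ∈ Icc 1 l, (2 * (k : K) + γ) / (2 * k - γ))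
    (hodd : ∀ l : ℕ, f (2 * l + 1) = ∏ k ∈ Icc 1 l, (2 * (k : K) + γ) / (2 * k - γ))
    (n : ℕ) :
    f (2 * n + 1) - f (2 * n) = ∏ k ∈ Icc 1 n, (2 * (k : K) - 2 + γ) / (2 * k - γ) := by
  rw [← prod_mul_div_eq_prod hγ, hodd, heven]
  have hn := two_mul_add_ne_zero hγ n
  field_simp
  ring

lemma sub_odd_eq_prod {f : ℕ → K} (hγ : ∀ k : ℤ, γ ≠ 2 * k)
    (heven : ∀ l : ℕ,
      f (2 * l) = (2 * l / (2 * l + γ)) * ∏ k ∈ Icc 1 l, (2 * (k : K) + γ) / (2 * k - γ))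
    (hodd : ∀ l : ℕ, f (2 * l + 1) = ∏ k ∈ Icc 1 l, (2 * (k : K) + γ) / (2 * k - γ))
    (n : ℕ) :
    f (2 * n + 2) - f (2 * n + 1) =
      ∏ k ∈ Icc 1 (n + 1), (2 * (k : K) - 2 + γ) / (2 * k - γ) := by
  rw [← prod_mul_div_eq_prod hγ, hodd, show 2 * n + 2 = 2 * (n + 1) by ring, heven,
    prod_Icc_succ_top (by omega)]
  have hadd := two_mul_add_ne_zero hγ (n + 1)
  have hsub := two_mul_sub_ne_zero hγ (n + 1)
  push_cast at hadd hsub ⊢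
  field_simp
  ring

end DiscretePower

lemma Complex.norm_div_conj {z : ℂ} (hz : z ≠ 0) : ‖z / conj z‖ = 1 := by
  rw [norm_div, norm_conj, div_self (norm_ne_zero_iff.mpr hz)]

lemma Complex.norm_prod_div_conj (δ : ℝ) (n : ℕ) :
    ‖∏ k ∈ Icc 1 n, (2 * (k : ℂ) - 1 + δ * I) / (2 * k - 1 - δ * I)‖ = 1 := by
  rw [norm_prod]
  refine prod_eq_one fun k hk => ?_
  have hre : 0 < (2 * (k : ℂ) - 1 + δ * I).re := by
    have : (1 : ℝ) ≤ k := by exact_mod_cast (mem_Icc.mp hk).1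
    simp; linarith
  have hconj : 2 * (k : ℂ) - 1 - δ * I = conj (2 * (k : ℂ) - 1 + δ * I) := by
    simp [Complex.ext_iff]
  rw [hconj]
  exact norm_div_conj fun h => by simp [h] at hre

/-- For `γ = 1 + iδ` with `δ ∈ ℝ`, the successive differences of the discrete
power function on the boundary are products of unit complex numbers
`(2k-1+iδ)/(2k-1-iδ)`; in particular all edges have length `1`. -/
theorem discrete_power_unit_edges
    (δ : ℝ) (γ : ℂ) (hγ : γ = 1 + δ * Complex.I)
    (f : ℕ → ℂ)
    (heven : ∀ l : ℕ,
      f (2 * l) = (2 * l / (2 * l + γ)) * ∏ k ∈ Icc 1 l, (2 * (k : ℂ) + γ) / (2 * k - γ))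
    (hodd : ∀ l : ℕ,
      f (2 * l + 1) = ∏ k ∈ Icc 1 l, (2 * (k : ℂ) + γ) / (2 * k - γ)) :
    (∀ n : ℕ,
      f (2 * n + 2) - f (2 * n + 1) =
        ∏ k ∈ Icc 1 (n + 1), (2 * (k : ℂ) - 1 + δ * Complex.I) / (2 * k - 1 - δ * Complex.I) ∧
      f (2 * n + 1) - f (2 * n) =
        ∏ k ∈ Icc 1 n, (2 * (k : ℂ) - 1 + δ * Complex.I) / (2 * k - 1 - δ * Complex.I)) ∧
    ∀ n : ℕ, ‖f (n + 1) - f n‖ = 1 := by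
  have hγ_odd : ∀ k : ℤ, γ ≠ 2 * k := fun k h => by
    have hre : (1 : ℝ) = 2 * k := by simpa [hγ] using congrArg re h
    have : (1 : ℤ) = 2 * k := by exact_mod_cast hre
    omega
  have hfactor : ∀ n : ℕ, ∏ k ∈ Icc 1 n, (2 * (k : ℂ) - 2 + γ) / (2 * k - γ) =
      ∏ k ∈ Icc 1 n, (2 * (k : ℂ) - 1 + δ * I) / (2 * k - 1 - δ * I) :=
    fun n => prod_congr rfl fun k _ => by rw [hγ]; ring_nf
  have hedges : ∀ n : ℕ, _ ∧ _ := fun n =>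
    ⟨(DiscretePower.sub_odd_eq_prod hγ_odd heven hodd n).trans (hfactor _),
      (DiscretePower.sub_even_eq_prod hγ_odd heven hodd n).trans (hfactor _)⟩
  refine ⟨hedges, fun n => ?_⟩
  obtain ⟨m, rfl | rfl⟩ := Nat.even_or_odd' n
  · rw [(hedges m).2, norm_prod_div_conj]
  · rw [(hedges m).1, norm_prod_div_conj]
end

section
/- Let γ ∈ ℂ \ 2ℤ and let f_n be defined by f_{2l} = (2l/(2l+γ)) ∏_{k=1}^{l} (2k+γ)/(2k−γ), f_{2l+1} = ∏_{k=1}^{l} (2k+γ)/(2k−γ). If |f_{n+1} − f_n| = |f_n − f_{n−1}| holds for all n ≥ 1, then Re γ = 1. -/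
open Finset Complex

/-!
The case `n = 1` already suffices: `f 0 = 0`, `f 1 = 1` and `f 2 = 2 / (2 - γ)`, so
`f 2 - f 1 = γ / (2 - γ)` and the hypothesis becomes `‖γ‖ = ‖2 - γ‖`, i.e. `γ` is equidistant
from `0` and `2`, which means `Re γ = 1`.
-/

theorem Complex.norm_eq_norm_two_sub_iff (z : ℂ) : ‖z‖ = ‖2 - z‖ ↔ z.re = 1 := by
  rw [← sq_eq_sq₀ (norm_nonneg _) (norm_nonneg _), Complex.sq_norm, Complex.sq_norm,
    Complex.normSq_apply, Complex.normSq_apply]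
  simp only [sub_re, sub_im, re_ofNat, im_ofNat]
  constructor <;> intro h <;> nlinarith

theorem Complex.norm_div_two_sub_sub_one (γ : ℂ) (hγ : 2 - γ ≠ 0) :
    ‖2 / (2 - γ) - 1‖ = ‖γ‖ / ‖2 - γ‖ := by
  rw [← norm_div]
  congr 1
  field_simp
  ring

/-- If all edges of the discrete power function on the boundary row have equal
length, then `Re γ = 1`. -/
theorem discrete_power_equal_edges_re_eq_one
    (γ : ℂ) (hγ : ∀ k : ℤ, γ ≠ 2 * k)
    (f : ℕ → ℂ)
    (heven : ∀ l : ℕ,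
      f (2 * l) = (2 * l / (2 * l + γ)) * ∏ k ∈ Icc 1 l, (2 * (k : ℂ) + γ) / (2 * k - γ))
    (hodd : ∀ l : ℕ,
      f (2 * l + 1) = ∏ k ∈ Icc 1 l, (2 * (k : ℂ) + γ) / (2 * k - γ))
    (hlen : ∀ n : ℕ, 1 ≤ n →
      ‖f (n + 1) - f n‖ = ‖f n - f (n - 1)‖) :
    γ.re = 1 := by
  have h2_sub : (2 : ℂ) - γ ≠ 0 := fun h => hγ 1 (by push_cast; linear_combination -h)
  have h2_add : (2 : ℂ) + γ ≠ 0 := fun h => hγ (-1) (by push_cast; linear_combination h)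
  have hf0 : f 0 = 0 := by simpa using heven 0
  have hf1 : f 1 = 1 := by simpa using hodd 0
  have hf2 : f 2 = 2 / (2 - γ) := by
    simpa [h2_add, div_mul_div_cancel₀] using heven 1
  have h1 := hlen 1 le_rfl
  simp only [Nat.reduceAdd, Nat.sub_self, hf0, hf1, hf2, sub_zero, norm_one,
    Complex.norm_div_two_sub_sub_one γ h2_sub] at h1
  rw [div_eq_one_iff_eq (norm_ne_zero_iff.mpr h2_sub)] at h1
  exact (Complex.norm_eq_norm_two_sub_iff γ).mp h1
end

section
/- Under the substitution x = e^{2iα}, y = e^{2iφ} with α, φ ∈ (0, π/2), and u = tan α, v = tan φ, the relation y' = Φ(x,y) = y·(x⁻¹y⁻¹ + xy⁻¹ − 2)/(xy + x⁻¹y − 2) is equivalent to tan φ' = u⁻² v, where y' = e^{2iφ'}. -/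
open Complex Real

lemma exp_two_mul_I' (θ : ℝ) : Complex.exp (2 * θ * Complex.I) =
    ((Real.cos θ ^ 2 - Real.sin θ ^ 2 : ℝ) : ℂ) + ((2 * Real.sin θ * Real.cos θ : ℝ) : ℂ) * Complex.I := by
  have h : (2 * (θ:ℂ) * Complex.I) = ((2*θ : ℝ) : ℂ) * Complex.I := by push_cast; ring
  rw [h, Complex.exp_mul_I, ← Complex.ofReal_cos, ← Complex.ofReal_sin,
    Real.cos_two_mul', Real.sin_two_mul]

set_option maxHeartbeats 2000000 in
/-- Under `x = e^{2iα}`, `y = e^{2iφ}`, `y' = e^{2iφ'}` with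
`α, φ, φ' ∈ (0, π/2)` and `u = tan α`, `v = tan φ`, the relation
`y' = Φ(x,y)` is equivalent to `tan φ' = u⁻² v`. -/
theorem Phi_equiv_tan_recurrence
    (α φ φ' : ℝ)
    (hα : α ∈ Set.Ioo 0 (Real.pi / 2))
    (hφ : φ ∈ Set.Ioo 0 (Real.pi / 2))
    (hφ' : φ' ∈ Set.Ioo 0 (Real.pi / 2))
    (x y y' : ℂ)
    (hx : x = Complex.exp (2 * α * Complex.I))
    (hy : y = Complex.exp (2 * φ * Complex.I))
    (hy' : y' = Complex.exp (2 * φ' * Complex.I))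
    (u v : ℝ) (hu : u = Real.tan α) (hv : v = Real.tan φ) :
    y' = y * (x⁻¹ * y⁻¹ + x * y⁻¹ - 2) / (x * y + x⁻¹ * y - 2) ↔
      Real.tan φ' = u⁻¹ ^ 2 * v := by
  obtain ⟨hα0, hα1⟩ := hα
  obtain ⟨hφ0, hφ1⟩ := hφ
  obtain ⟨hφ'0, hφ'1⟩ := hφ'
  set s := Real.sin α with hs
  set c := Real.cos α with hc
  set S := Real.sin φ with hS
  set C := Real.cos φ with hC
  set S' := Real.sin φ' with hS'
  set C' := Real.cos φ' with hC'
  have hspos : 0 < s := Real.sin_pos_of_pos_of_lt_pi hα0 (by linarith [Real.pi_pos])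
  have hcpos : 0 < c := Real.cos_pos_of_mem_Ioo ⟨by linarith [Real.pi_pos], hα1⟩
  have hSpos : 0 < S := Real.sin_pos_of_pos_of_lt_pi hφ0 (by linarith [Real.pi_pos])
  have hCpos : 0 < C := Real.cos_pos_of_mem_Ioo ⟨by linarith [Real.pi_pos], hφ1⟩
  have hS'pos : 0 < S' := Real.sin_pos_of_pos_of_lt_pi hφ'0 (by linarith [Real.pi_pos])
  have hC'pos : 0 < C' := Real.cos_pos_of_mem_Ioo ⟨by linarith [Real.pi_pos], hφ'1⟩
  have pyth1 : s^2 + c^2 = 1 := Real.sin_sq_add_cos_sq α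
  have pyth2 : S^2 + C^2 = 1 := Real.sin_sq_add_cos_sq φ
  have pyth3 : S'^2 + C'^2 = 1 := Real.sin_sq_add_cos_sq φ'
  have p1c : (s:ℂ)^2 + (c:ℂ)^2 = 1 := by exact_mod_cast pyth1
  have p2c : (S:ℂ)^2 + (C:ℂ)^2 = 1 := by exact_mod_cast pyth2
  have i2 : (Complex.I)^2 = -1 := Complex.I_sq
  set A : ℝ := s^2*C with hA
  set B : ℝ := c^2*S with hB
  have hApos : 0 < A := by rw [hA]; positivity
  have hBpos : 0 < B := by rw [hB]; positivity
  -- explicit forms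
  have hxv : x = ((c^2 - s^2 : ℝ) : ℂ) + ((2*s*c : ℝ) : ℂ) * Complex.I := by
    rw [hx, exp_two_mul_I']
  have hyv : y = ((C^2 - S^2 : ℝ) : ℂ) + ((2*S*C : ℝ) : ℂ) * Complex.I := by
    rw [hy, exp_two_mul_I']
  have hxinv : x⁻¹ = ((c^2 - s^2 : ℝ) : ℂ) - ((2*s*c : ℝ) : ℂ) * Complex.I := by
    refine inv_eq_of_mul_eq_one_right ?_
    rw [hxv]; push_cast
    linear_combination (-(4*(s:ℂ)^2*(c:ℂ)^2)) * i2 + ((s:ℂ)^2+(c:ℂ)^2+1) * p1c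
  have hyinv : y⁻¹ = ((C^2 - S^2 : ℝ) : ℂ) - ((2*S*C : ℝ) : ℂ) * Complex.I := by
    refine inv_eq_of_mul_eq_one_right ?_
    rw [hyv]; push_cast
    linear_combination (-(4*(S:ℂ)^2*(C:ℂ)^2)) * i2 + ((S:ℂ)^2+(C:ℂ)^2+1) * p2c
  set E : ℂ := (C:ℂ) + (S:ℂ) * Complex.I with hE
  set w : ℂ := (A:ℂ) + (B:ℂ) * Complex.I with hw
  set wb : ℂ := (A:ℂ) - (B:ℂ) * Complex.I with hwb
  have hEne : E ≠ 0 := by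
    rw [hE]
    intro h
    rw [Complex.ext_iff] at h
    simp at h
    nlinarith [h.1]
  have hwbne : wb ≠ 0 := by
    rw [hwb]
    intro h
    rw [Complex.ext_iff] at h
    simp at h
    nlinarith [h.1]
  have hD : x * y + x⁻¹ * y - 2 = -4 * E * wb := by
    rw [hxinv, hxv, hyv, hE, hwb, hA, hB]; push_cast
    linear_combination (2:ℂ) * p1c + 2*((s:ℂ)^2+(c:ℂ)^2) * p2c
      + (-(4*(c:ℂ)^2*(S:ℂ)^2)) * i2
  have hN : y * (x⁻¹ * y⁻¹ + x * y⁻¹ - 2) = -4 * E * w := by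
    rw [hxinv, hyinv, hxv, hyv, hE, hw, hA, hB]; push_cast
    linear_combination (4*(S:ℂ)*(C:ℂ)*Complex.I + 2*((C:ℂ)^2-(S:ℂ)^2)) * p1c
      + (2*((c:ℂ)^2-(s:ℂ)^2)*((C:ℂ)^2+(S:ℂ)^2)) * p2c
      + (-(8*((c:ℂ)^2-(s:ℂ)^2)*(S:ℂ)^2*(C:ℂ)^2) + 4*(c:ℂ)^2*(S:ℂ)^2) * i2
  have hDen0 : x * y + x⁻¹ * y - 2 ≠ 0 := by
    rw [hD]
    exact mul_ne_zero (mul_ne_zero (by norm_num) hEne) hwbne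
  rw [eq_div_iff hDen0, hN, hD, hy', exp_two_mul_I' φ', ← hS', ← hC']
  set z1 : ℝ := C'^2 - S'^2 with hz1
  set z2 : ℝ := 2*S'*C' with hz2
  have cancel : ((z1:ℂ) + (z2:ℂ) * Complex.I) * (-4 * E * wb) = -4 * E * w ↔
      ((z1:ℂ) + (z2:ℂ) * Complex.I) * wb = w := by
    constructor
    · intro h
      have h4 : (-4 : ℂ) * E ≠ 0 := mul_ne_zero (by norm_num) hEne
      apply mul_left_cancel₀ h4
      calc (-4 * E) * (((z1:ℂ) + (z2:ℂ) * Complex.I) * wb)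
          = ((z1:ℂ) + (z2:ℂ) * Complex.I) * (-4 * E * wb) := by ring
        _ = -4 * E * w := h
        _ = (-4 * E) * w := by ring
    · intro h
      calc ((z1:ℂ) + (z2:ℂ) * Complex.I) * (-4 * E * wb)
          = (-4 * E) * (((z1:ℂ) + (z2:ℂ) * Complex.I) * wb) := by ring
        _ = (-4 * E) * w := by rw [h]
        _ = -4 * E * w := by ring
  rw [cancel, hw, hwb, Complex.ext_iff]
  have hre : (((z1:ℂ) + (z2:ℂ) * Complex.I) * ((A:ℂ) - (B:ℂ) * Complex.I)).re
      = z1 * A + z2 * B := by simp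
  have him : (((z1:ℂ) + (z2:ℂ) * Complex.I) * ((A:ℂ) - (B:ℂ) * Complex.I)).im
      = z2 * A - z1 * B := by simp; ring
  have hre2 : ((A:ℂ) + (B:ℂ) * Complex.I).re = A := by simp
  have him2 : ((A:ℂ) + (B:ℂ) * Complex.I).im = B := by simp
  rw [hre, him, hre2, him2]
  -- real-number part
  have htan : Real.tan φ' = S'/C' := Real.tan_eq_sin_div_cos φ'
  have hrhs : u⁻¹ ^ 2 * v = B/A := by
    rw [hu, hv, Real.tan_eq_sin_div_cos, Real.tan_eq_sin_div_cos, ← hs, ← hc, ← hS, ← hC,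
      inv_div, hA, hB]
    field_simp
  have htarget : Real.tan φ' = u⁻¹ ^ 2 * v ↔ A * S' = B * C' := by
    rw [htan, hrhs, div_eq_div_iff (ne_of_gt hC'pos) (ne_of_gt hApos)]
    constructor <;> intro h <;> linear_combination h
  rw [htarget]
  constructor
  · rintro ⟨h1, _⟩
    rw [hz1, hz2] at h1
    have h2 : 2*S'*(B*C' - A*S') = 0 := by linear_combination h1 - A * pyth3
    have h3 : B*C' - A*S' = 0 := by
      rcases mul_eq_zero.mp h2 with h | h
      · nlinarith
      · exact h
    linarith
  · intro h
    rw [hz1, hz2]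
    constructor
    · linear_combination (-(2*S'))*h + A * pyth3
    · linear_combination 2*C'*h + B * pyth3
end

section
/- Fix δ ∈ ℝ and for k ≥ 0 set ε_k = δ/(2k+1). Define a sequence R_k of positive reals by R_0 = ζ > 0 and R_{k+1} = (1 − ε_k R_k)/(R_k + ε_k), assuming all terms stay positive. Let r = (1+iδ)/2 and define V_k = i·[(−1)^k(P_k − Q_k) − iζ(P_k + Q_k)]/[(−1)^k(P_k + Q_k) − iζ(P_k − Q_k)] where P_k = ((r−k+1)/2)_k and Q_k = ((r−k)/2)_k are Pochhammer symbols. Then R_k = V_k for all k ≥ 0. -/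
/-!
Shifting `k` by one exchanges the two Pochhammer products up to a linear factor:
`P_{k+1} = (r + k)/2 · Q_k` and `Q_{k+1} = (r - k - 1)/2 · P_k`. With `δ = ε_k (2k + 1)` this makes
the numerator `X_k = i·[…]` and denominator `D_k` of `V_k` evolve by a scalar multiple of the
matrix `[[-ε_k, 1], [1, ε_k]]`, which is exactly the Möbius map `R ↦ (1 - ε_k R)/(R + ε_k)`
written in homogeneous coordinates. Since `x / 0 = 0`, it is `R_k ≠ 0` that rules out `D_k = 0`
along the induction.
-/

open Complex Polynomial

theorem eq_div_of_moebius_recurrence {K : Type*} [Field K] {e c R X D : ℕ → K}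
    (hc : ∀ k, c k ≠ 0) (hR0 : R 0 = X 0 / D 0) (hR_ne : ∀ k, R k ≠ 0)
    (hR : ∀ k, R (k + 1) = (1 - e k * R k) / (R k + e k))
    (hX : ∀ k, X (k + 1) = c k * (D k - e k * X k))
    (hD : ∀ k, D (k + 1) = c k * (X k + e k * D k)) :
    ∀ k, R k = X k / D k := by
  intro k
  induction k with
  | zero => exact hR0
  | succ k ih =>
    have hDk : D k ≠ 0 := fun h => hR_ne k (by rw [ih, h, div_zero])
    rw [hR k, hX k, hD k, mul_div_mul_left _ _ (hc k), ih]
    field_simp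

section Pochhammer

variable {K : Type*} [Field K] [NeZero (2 : K)]

noncomputable def pochP (r : K) (k : ℕ) : K := (ascPochhammer K k).eval ((r - k + 1) / 2)

noncomputable def pochQ (r : K) (k : ℕ) : K := (ascPochhammer K k).eval ((r - k) / 2)

theorem pochP_succ (r : K) (k : ℕ) : pochP r (k + 1) = (r + k) / 2 * pochQ r k := by
  rw [pochP, pochQ, ascPochhammer_succ_eval]
  push_cast
  rw [show (r - (k + 1) + 1) / 2 = (r - k) / 2 by ring]
  field_simp
  ring

theorem pochQ_succ (r : K) (k : ℕ) : pochQ r (k + 1) = (r - k - 1) / 2 * pochP r k := by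
  rw [pochP, pochQ, ascPochhammer_succ_left, eval_mul, eval_X, eval_comp, eval_add, eval_X,
    eval_one]
  push_cast
  congr 2
  · ring
  · field_simp
    ring

end Pochhammer

section Radius

def radiusNum (ζ : ℂ) (k : ℕ) (p q : ℂ) : ℂ := I * ((-1) ^ k * (p - q) - I * ζ * (p + q))

def radiusDen (ζ : ℂ) (k : ℕ) (p q : ℂ) : ℂ := (-1) ^ k * (p + q) - I * ζ * (p - q)

variable {ζ r e p q : ℂ} {k : ℕ}

theorem radiusNum_succ (hr : r = (1 + I * e * (2 * k + 1)) / 2) :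
    radiusNum ζ (k + 1) ((r + k) / 2 * q) ((r - k - 1) / 2 * p) =
      -I * ((2 * k + 1) / 4) * (radiusDen ζ k p q - e * radiusNum ζ k p q) := by
  subst hr
  unfold radiusNum radiusDen
  ring

theorem radiusDen_succ (hr : r = (1 + I * e * (2 * k + 1)) / 2) :
    radiusDen ζ (k + 1) ((r + k) / 2 * q) ((r - k - 1) / 2 * p) =
      -I * ((2 * k + 1) / 4) * (radiusNum ζ k p q + e * radiusDen ζ k p q) := by
  subst hr
  unfold radiusNum radiusDen
  linear_combination (2 * k + 1) / 4 * ((-1) ^ k * (p - q) - I * ζ * (p + q)) * I_sq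

end Radius

theorem radii_closed_form_general
    (δ : ℝ) (ζ : ℝ)
    (ε : ℕ → ℝ) (hε : ∀ k, ε k = δ / (2 * k + 1))
    (R : ℕ → ℝ) (hR0 : R 0 = ζ)
    (hRpos : ∀ k, 0 < R k)
    (hRrec : ∀ k, R (k + 1) = (1 - ε k * R k) / (R k + ε k))
    (r : ℂ) (hr : r = (1 + δ * Complex.I) / 2)
    (P Q V : ℕ → ℂ)
    (hP : ∀ k, P k = (ascPochhammer ℂ k).eval ((r - k + 1) / 2))
    (hQ : ∀ k, Q k = (ascPochhammer ℂ k).eval ((r - k) / 2))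
    (hV : ∀ k, V k = Complex.I *
      ((((-1 : ℂ) ^ k) * (P k - Q k) - Complex.I * ζ * (P k + Q k)) /
       ((((-1 : ℂ) ^ k) * (P k + Q k)) - Complex.I * ζ * (P k - Q k)))) :
    ∀ k, (R k : ℂ) = V k := by
  obtain rfl : P = pochP r := funext hP
  obtain rfl : Q = pochQ r := funext hQ
  have h_odd_ne (k : ℕ) : (2 * k + 1 : ℂ) ≠ 0 := by exact_mod_cast (by omega : 2 * k + 1 ≠ 0)
  have hr_eq (k : ℕ) : r = (1 + I * ε k * (2 * k + 1)) / 2 := by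
    rw [hr, hε k]
    push_cast
    field_simp [h_odd_ne k]
  intro k
  rw [hV, ← mul_div_assoc]
  refine eq_div_of_moebius_recurrence (e := fun k => (ε k : ℂ))
    (c := fun k => -I * ((2 * k + 1) / 4)) (R := fun k => (R k : ℂ))
    (X := fun k => radiusNum ζ k (pochP r k) (pochQ r k))
    (D := fun k => radiusDen ζ k (pochP r k) (pochQ r k)) (fun k => ?_) ?_
    (fun k => by exact_mod_cast (hRpos k).ne') (fun k => by rw [hRrec k]; push_cast; rfl)
    (fun k => ?_) (fun k => ?_) k
  · exact mul_ne_zero (neg_ne_zero.mpr I_ne_zero) (div_ne_zero (h_odd_ne k) (by norm_num))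
  · simp only [hR0, radiusNum, radiusDen, pochP, pochQ, ascPochhammer_zero, eval_one]
    linear_combination (ζ : ℂ) * I_sq
  · simp only [pochP_succ, pochQ_succ, radiusNum_succ (hr_eq k)]
  · simp only [pochP_succ, pochQ_succ, radiusDen_succ (hr_eq k)]

/-- Closed form for the circle radii `R_k = R_{2k,1}` of the circle pattern of
`z^{1+iδ}`: the sequence defined by `R_0 = ζ > 0` and
`R_{k+1} = (1 - ε_k R_k)/(R_k + ε_k)`, `ε_k = δ/(2k+1)`, coincides with the
explicit Pochhammer expression `V_k`. -/
theorem radii_closed_form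
    (δ : ℝ) (ζ : ℝ) (hζ : 0 < ζ)
    (ε : ℕ → ℝ) (hε : ∀ k, ε k = δ / (2 * k + 1))
    (R : ℕ → ℝ) (hR0 : R 0 = ζ)
    (hRpos : ∀ k, 0 < R k)
    (hRrec : ∀ k, R (k + 1) = (1 - ε k * R k) / (R k + ε k))
    (r : ℂ) (hr : r = (1 + δ * Complex.I) / 2)
    (P Q V : ℕ → ℂ)
    (hP : ∀ k, P k = (ascPochhammer ℂ k).eval ((r - k + 1) / 2))
    (hQ : ∀ k, Q k = (ascPochhammer ℂ k).eval ((r - k) / 2))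
    (hV : ∀ k, V k = Complex.I *
      ((((-1 : ℂ) ^ k) * (P k - Q k) - Complex.I * ζ * (P k + Q k)) /
       ((((-1 : ℂ) ^ k) * (P k + Q k)) - Complex.I * ζ * (P k - Q k)))) :
    ∀ k, (R k : ℂ) = V k :=
  radii_closed_form_general δ ζ ε hε R hR0 hRpos hRrec r hr P Q V hP hQ hV
end

section
/- Let f : ℤ² → ℂ satisfy f_{n,m} − f_{n+1,m} = t^{−1/2} v_{n,m} v_{n+1,m} and f_{n,m} − f_{n,m+1} = v_{n,m} v_{n,m+1} for some function v : ℤ² → ℂ∖{0} and fixed t ∈ ℂ∖{0,1} with a fixed square root t^{1/2}. Then f satisfies the discrete Schwarzian KdV equation ((f_{n,m} − f_{n+1,m})(f_{n+1,m+1} − f_{n,m+1}))/((f_{n+1,m} − f_{n+1,m+1})(f_{n,m+1} − f_{n,m})) = 1/t, provided v satisfies the lattice modified KdV equation t^{1/2} v_{n,m} v_{n,m+1} + v_{n,m+1} v_{n+1,m+1} = v_{n,m} v_{n+1,m} + t^{1/2} v_{n+1,m} v_{n+1,m+1}, and conversely the existence of f with the two stated edge relations (consistency around a quadrilateral) is equivalent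 to v satisfying the lattice modified KdV equation. -/
/-!
Write `a, b, c, d` for the values of `v` at the corners `(n,m), (n+1,m), (n,m+1), (n+1,m+1)`.
The two edge relations prescribe the differences of `f` along all four edges of the square, and
such differences come from a potential on `ℤ²` exactly when they add up to zero around every
square (a discrete Poincaré lemma). Around a square that closure condition reads
`s⁻¹ a b + b d = a c + s⁻¹ c d`, which is the lattice mKdV equation multiplied by `s⁻¹`.
The cross-ratio of `f` is then `(s⁻¹ a b)(s⁻¹ c d) / ((b d)(a c)) = s⁻² = 1 / t`.
-/

open Finset

section DiscretePoincare

variable {G : Type*} [AddCommGroup G]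

noncomputable def discretePrimitive (h : ℤ → G) (m : ℤ) : G :=
  ∑ k ∈ Ico 0 m, h k - ∑ k ∈ Ico m 0, h k

@[simp]
lemma discretePrimitive_zero (h : ℤ → G) : discretePrimitive h 0 = 0 := by
  simp [discretePrimitive]

lemma discretePrimitive_add_one (h : ℤ → G) (m : ℤ) :
    discretePrimitive h (m + 1) = discretePrimitive h m + h m := by
  unfold discretePrimitive
  rcases le_or_gt 0 m with hm | hm
  · rw [Ico_eq_empty_of_le hm, Ico_eq_empty_of_le (by omega : (0 : ℤ) ≤ m + 1),
      ← sum_Ico_add_eq_sum_Ico_add_one hm]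
    simp
  · rw [Ico_eq_empty_of_le hm.le, Ico_eq_empty_of_le (by omega : m + 1 ≤ 0),
      ← insert_Ico_add_one_left_eq_Ico hm, sum_insert (by simp)]
    abel

lemma exists_potential_iff (p q : ℤ → ℤ → G) :
    (∃ f : ℤ → ℤ → G, ∀ n m, f n m - f (n + 1) m = p n m ∧ f n m - f n (m + 1) = q n m) ↔
      ∀ n m, p n m + q (n + 1) m = q n m + p n (m + 1) := by
  constructor
  · rintro ⟨f, hf⟩ n m
    rw [← (hf n m).1, ← (hf (n + 1) m).2, ← (hf n m).2, ← (hf n (m + 1)).1]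
    abel
  · intro hclosed
    let f n m := -(discretePrimitive (fun k => p k 0) n + discretePrimitive (q n) m)
    have hvert : ∀ n m, f n m - f n (m + 1) = q n m := fun n m => by
      simp only [f, discretePrimitive_add_one]
      abel
    refine ⟨f, fun n m => ⟨?_, hvert n m⟩⟩
    have hdefect : Function.Periodic (fun m => f n m - f (n + 1) m - p n m) 1 := fun m => by
      have e₀ : f n (m + 1) = f n m - q n m := by rw [← hvert n m, sub_sub_cancel]
      have e₁ : f (n + 1) (m + 1) = f (n + 1) m - q (n + 1) m := by
        rw [← hvert (n + 1) m, sub_sub_cancel]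
      have e₂ : p n (m + 1) = p n m + q (n + 1) m - q n m := by
        rw [hclosed, add_sub_cancel_left]
      simp only [e₀, e₁, e₂]
      abel
    have h₀ : f n 0 - f (n + 1) 0 - p n 0 = 0 := by
      simp only [f, discretePrimitive_zero, discretePrimitive_add_one]
      abel
    simpa [h₀, sub_eq_zero] using hdefect.int_mul_eq m

end DiscretePoincare

section Miura

variable {K : Type*} [Field K]

lemma closed_square_iff_mKdV {s : K} (hs : s ≠ 0) (a b c d : K) :
    s⁻¹ * (a * b) + b * d = a * c + s⁻¹ * (c * d) ↔
      s * (a * c) + c * d = a * b + s * (b * d) := by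
  rw [← mul_right_inj' hs, eq_comm, mul_add, mul_add, mul_inv_cancel_left₀ hs,
    mul_inv_cancel_left₀ hs]

lemma crossRatio_eq_of_edge_relations {s : K} {f v : ℤ → ℤ → K} (hv : ∀ n m, v n m ≠ 0)
    (hf : ∀ n m, f n m - f (n + 1) m = s⁻¹ * (v n m * v (n + 1) m) ∧
      f n m - f n (m + 1) = v n m * v n (m + 1)) (n m : ℤ) :
    ((f n m - f (n + 1) m) * (f (n + 1) (m + 1) - f n (m + 1))) /
      ((f (n + 1) m - f (n + 1) (m + 1)) * (f n (m + 1) - f n m)) = (s ^ 2)⁻¹ := by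
  rw [← neg_sub (f n (m + 1)), ← neg_sub (f n m) (f n (m + 1)), (hf n m).1, (hf n (m + 1)).1,
    (hf (n + 1) m).2, (hf n m).2]
  field_simp [hv n m, hv (n + 1) m, hv n (m + 1), hv (n + 1) (m + 1)]

end Miura

theorem discrete_SKdV_mKdV_correspondence_general
    (t s : ℂ) (ht0 : t ≠ 0) (hs : s ^ 2 = t)
    (v : ℤ → ℤ → ℂ) (hv : ∀ n m, v n m ≠ 0) :
    ((∃ f : ℤ → ℤ → ℂ, ∀ n m : ℤ,
        f n m - f (n + 1) m = s⁻¹ * (v n m * v (n + 1) m) ∧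
        f n m - f n (m + 1) = v n m * v n (m + 1)) ↔
      (∀ n m : ℤ,
        s * (v n m * v n (m + 1)) + v n (m + 1) * v (n + 1) (m + 1) =
          v n m * v (n + 1) m + s * (v (n + 1) m * v (n + 1) (m + 1)))) ∧
    (∀ f : ℤ → ℤ → ℂ,
      (∀ n m : ℤ,
        f n m - f (n + 1) m = s⁻¹ * (v n m * v (n + 1) m) ∧
        f n m - f n (m + 1) = v n m * v n (m + 1)) →
      (∀ n m : ℤ,
        s * (v n m * v n (m + 1)) + v n (m + 1) * v (n + 1) (m + 1) =
          v n m * v (n + 1) m + s * (v (n + 1) m * v (n + 1) (m + 1))) →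
      ∀ n m : ℤ,
        ((f n m - f (n + 1) m) * (f (n + 1) (m + 1) - f n (m + 1))) /
          ((f (n + 1) m - f (n + 1) (m + 1)) * (f n (m + 1) - f n m)) = 1 / t) := by
  have hs0 : s ≠ 0 := ne_zero_pow two_ne_zero (hs ▸ ht0)
  refine ⟨?_, fun f hf _ n m => ?_⟩
  · rw [exists_potential_iff]
    exact forall₂_congr fun n m => closed_square_iff_mKdV hs0 _ _ _ _
  · rw [crossRatio_eq_of_edge_relations hv hf, hs, one_div]

/-- Miura-type correspondence between the discrete Schwarzian KdV equation with
cross-ratio `1/t` and the lattice modified KdV equation: the two edge relations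
`f_{n,m} - f_{n+1,m} = t^{-1/2} v_{n,m} v_{n+1,m}`,
`f_{n,m} - f_{n,m+1} = v_{n,m} v_{n,m+1}` admit a solution `f` iff `v`
satisfies the lattice mKdV equation, and any such `f` satisfies the discrete
Schwarzian KdV equation. -/
theorem discrete_SKdV_mKdV_correspondence
    (t s : ℂ) (ht0 : t ≠ 0) (ht1 : t ≠ 1) (hs : s ^ 2 = t)
    (v : ℤ → ℤ → ℂ) (hv : ∀ n m, v n m ≠ 0) :
    ((∃ f : ℤ → ℤ → ℂ, ∀ n m : ℤ,
        f n m - f (n + 1) m = s⁻¹ * (v n m * v (n + 1) m) ∧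
        f n m - f n (m + 1) = v n m * v n (m + 1)) ↔
      (∀ n m : ℤ,
        s * (v n m * v n (m + 1)) + v n (m + 1) * v (n + 1) (m + 1) =
          v n m * v (n + 1) m + s * (v (n + 1) m * v (n + 1) (m + 1)))) ∧
    (∀ f : ℤ → ℤ → ℂ,
      (∀ n m : ℤ,
        f n m - f (n + 1) m = s⁻¹ * (v n m * v (n + 1) m) ∧
        f n m - f n (m + 1) = v n m * v n (m + 1)) →
      (∀ n m : ℤ,
        s * (v n m * v n (m + 1)) + v n (m + 1) * v (n + 1) (m + 1) =
          v n m * v (n + 1) m + s * (v (n + 1) m * v (n + 1) (m + 1))) →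
      ∀ n m : ℤ,
        ((f n m - f (n + 1) m) * (f (n + 1) (m + 1) - f n (m + 1))) /
          ((f (n + 1) m - f (n + 1) (m + 1)) * (f n (m + 1) - f n m)) = 1 / t) :=
  discrete_SKdV_mKdV_correspondence_general t s ht0 hs v hv
end
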